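/- arXiv:1205.2548 — 6 statements merged into one kernel-verified Lean document; each statement's English description precedes it below -/
import Mathlib

section
/- Monotonicity of bounding regions: Let Δ ≥ 4 be an integer, let u, v, u', v' ∈ ℝ² be points with u_y = v_y = u'_y = v'_y and u_x ≤ u'_x ≤ v'_x ≤ v_x, and let ℓ, ℓ', r, r' be integers with 0 ≤ ℓ ≤ ℓ' ≤ Δ−1 and 0 ≤ r' ≤ r ≤ Δ−1. Then BR(u'v', ℓ', r') ⊆ BR(uv, ℓ, r). -/
open Set

/-- The vector `f i = (−1/2 + (i−1)/(Δ−3), 1)`. -/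
noncomputable def f (Δ i : ℕ) : ℝ × ℝ :=
  (-(1 / 2) + ((i : ℝ) - 1) / ((Δ : ℝ) - 3), 1)

/-- The cross product `cross(d, w) = d_x·w_y − d_y·w_x`. -/
def cross (d w : ℝ × ℝ) : ℝ := d.1 * w.2 - d.2 * w.1

/-- The left bounding cone `LBR(v, ℓ)`. -/
def LBR (Δ : ℕ) (v : ℝ × ℝ) (ℓ : ℕ) : Set (ℝ × ℝ) :=
  insert v {p | v.2 ≤ p.2 ∧
    (ℓ = 1 → cross (f Δ 1) (p - v) ≤ 0) ∧
    (Δ = 4 ∧ ℓ = 2 → v.1 < p.1) ∧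
    (5 ≤ Δ ∧ 2 ≤ ℓ ∧ ℓ ≤ Δ - 2 →
      cross (f Δ ℓ + (1 / ((Δ : ℝ) - 4)) • f Δ 1) (p - v) < 0) ∧
    (ℓ = Δ - 1 → cross (f Δ (Δ - 2)) (p - v) < 0)}

/-- The right bounding cone `RBR(v, r)`. -/
def RBR (Δ : ℕ) (v : ℝ × ℝ) (r : ℕ) : Set (ℝ × ℝ) :=
  insert v {p | v.2 ≤ p.2 ∧
    (r = 0 → 0 < cross (f Δ 1) (p - v)) ∧
    (Δ = 4 ∧ r = 1 → p.1 < v.1) ∧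
    (5 ≤ Δ ∧ 1 ≤ r ∧ r ≤ Δ - 3 →
      0 < cross (f Δ r + (1 / ((Δ : ℝ) - 4)) • f Δ (Δ - 2)) (p - v)) ∧
    (r = Δ - 2 → 0 ≤ cross (f Δ (Δ - 2)) (p - v))}

/-- The bounding region `BR(uv, ℓ, r) = LBR(u, ℓ) ∩ RBR(v, r)`. -/
def BR (Δ : ℕ) (u v : ℝ × ℝ) (ℓ r : ℕ) : Set (ℝ × ℝ) :=
  LBR Δ u ℓ ∩ RBR Δ v r

/-- The truncated bounding region `BRU(uv, ℓ, r, h)`. -/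
def BRU (Δ : ℕ) (u v : ℝ × ℝ) (ℓ r : ℕ) (h : ℝ) : Set (ℝ × ℝ) :=
  BR Δ u v ℓ r ∩ {p | p.2 < u.2 + h}

lemma cross_f_sub (Δ i : ℕ) (p v : ℝ × ℝ) :
    cross (f Δ i) (p - v) = (f Δ i).1 * (p.2 - v.2) - (p.1 - v.1) := by
  simp [cross, f]

lemma cross_fc_sub (Δ i j : ℕ) (c : ℝ) (p v : ℝ × ℝ) :
    cross (f Δ i + c • f Δ j) (p - v) =
      ((f Δ i).1 + c * (f Δ j).1) * (p.2 - v.2) - (1 + c) * (p.1 - v.1) := by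
  simp only [cross, Prod.fst_add, Prod.snd_add, Prod.smul_fst, Prod.smul_snd,
    Prod.fst_sub, Prod.snd_sub, smul_eq_mul, f]
  ring

lemma f_one (Δ : ℕ) : (f Δ 1).1 = -(1/2) := by simp [f]

lemma f_fst_mono (Δ : ℕ) (hΔ : 4 ≤ Δ) {i j : ℕ} (h : i ≤ j) :
    (f Δ i).1 ≤ (f Δ j).1 := by
  have hD : (4:ℝ) ≤ (Δ:ℝ) := by exact_mod_cast hΔ
  have h3 : (0:ℝ) < (Δ:ℝ) - 3 := by linarith
  have hij : (i:ℝ) ≤ (j:ℝ) := by exact_mod_cast h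
  have := (div_le_div_iff_of_pos_right h3).mpr (by linarith : (i:ℝ) - 1 ≤ (j:ℝ) - 1)
  simp only [f]
  linarith

lemma f_top (Δ : ℕ) (hΔ : 4 ≤ Δ) : (f Δ (Δ - 2)).1 = 1/2 := by
  have hD : (4:ℝ) ≤ (Δ:ℝ) := by exact_mod_cast hΔ
  have h2 : ((Δ - 2 : ℕ) : ℝ) = (Δ:ℝ) - 2 := by
    have : 2 ≤ Δ := by omega
    push_cast [this]; ring
  have h3 : (Δ:ℝ) - 3 ≠ 0 := by linarith
  simp only [f, h2]
  rw [show (Δ:ℝ) - 2 - 1 = (Δ:ℝ) - 3 by ring, div_self h3]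
  norm_num

lemma LBR_mono (Δ : ℕ) (hΔ : 4 ≤ Δ) (u u' : ℝ × ℝ) (hy : u.2 = u'.2)
    (hx : u.1 ≤ u'.1) (ℓ ℓ' : ℕ) (hll : ℓ ≤ ℓ') (hl' : ℓ' ≤ Δ - 1) :
    LBR Δ u' ℓ' ⊆ LBR Δ u ℓ := by
  have hD : (4:ℝ) ≤ (Δ:ℝ) := by exact_mod_cast hΔ
  intro p hp
  simp only [LBR, Set.mem_insert_iff, Set.mem_setOf_eq] at hp ⊢
  rcases hp with rfl | ⟨hpy, h1, h2, h3, h4⟩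
  · -- p = u'
    rcases hx.lt_or_eq with hlt | heq
    · right
      refine ⟨le_of_eq hy, ?_, ?_, ?_, ?_⟩
      · intro _
        rw [cross_f_sub]
        have : p.2 - u.2 = 0 := by rw [hy]; ring
        rw [this]; nlinarith
      · exact fun _ => hlt
      · rintro ⟨h5, -, -⟩
        have h5' : (5:ℝ) ≤ (Δ:ℝ) := by exact_mod_cast h5
        have hc : 0 < 1 / ((Δ:ℝ) - 4) := one_div_pos.mpr (by linarith)
        rw [cross_fc_sub]
        have hy0 : p.2 - u.2 = 0 := by rw [hy]; ring
        rw [hy0]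
        nlinarith
      · intro _
        rw [cross_f_sub]
        have hy0 : p.2 - u.2 = 0 := by rw [hy]; ring
        rw [hy0]; nlinarith
    · left
      exact (Prod.ext_iff.mpr ⟨heq, hy⟩).symm
  · right
    have hy0 : (0:ℝ) ≤ p.2 - u'.2 := by linarith
    have hX : p.1 - u'.1 ≤ p.1 - u.1 := by linarith
    have hy2 : p.2 - u.2 = p.2 - u'.2 := by rw [hy]
    refine ⟨by linarith, ?_, ?_, ?_, ?_⟩
    · -- ℓ = 1
      intro hl1
      have hcase : ℓ' = 1 ∨ (Δ = 4 ∧ ℓ' = 2) ∨ (5 ≤ Δ ∧ 2 ≤ ℓ' ∧ ℓ' ≤ Δ - 2) ∨ ℓ' = Δ - 1 := by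
        omega
      rw [cross_f_sub, f_one, hy2]
      rcases hcase with h | h | h | h
      · have := h1 h; rw [cross_f_sub, f_one] at this; linarith
      · have := h2 h; linarith
      · have h5' : (5:ℝ) ≤ (Δ:ℝ) := by exact_mod_cast h.1
        have hc : 0 < 1 / ((Δ:ℝ) - 4) := one_div_pos.mpr (by linarith)
        have hA : -(1/2) ≤ (f Δ ℓ').1 := by
          rw [← f_one Δ]; exact f_fst_mono Δ hΔ (by omega)
        have := h3 h
        rw [cross_fc_sub, f_one] at this
        nlinarith [mul_nonneg (le_of_lt hc) hy0,
          mul_nonneg (by linarith : (0:ℝ) ≤ (f Δ ℓ').1 + 1/2) hy0]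
      · have := h4 h; rw [cross_f_sub, f_top Δ hΔ] at this; linarith
    · -- Δ = 4 ∧ ℓ = 2
      rintro ⟨hΔ4, hl2⟩
      have hcase : ℓ' = 2 ∨ ℓ' = Δ - 1 := by omega
      rcases hcase with h | h
      · have := h2 ⟨hΔ4, h⟩; linarith
      · have := h4 h; rw [cross_f_sub, f_top Δ hΔ] at this; linarith
    · -- 5 ≤ Δ ∧ 2 ≤ ℓ ≤ Δ - 2
      rintro ⟨h5, hl2, hlD⟩
      have h5' : (5:ℝ) ≤ (Δ:ℝ) := by exact_mod_cast h5
      have hc : 0 < 1 / ((Δ:ℝ) - 4) := one_div_pos.mpr (by linarith)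
      rw [cross_fc_sub, f_one, hy2]
      have hcase : (2 ≤ ℓ' ∧ ℓ' ≤ Δ - 2) ∨ ℓ' = Δ - 1 := by omega
      rcases hcase with h | h
      · have hAA : (f Δ ℓ).1 ≤ (f Δ ℓ').1 := f_fst_mono Δ hΔ hll
        have := h3 ⟨h5, h.1, h.2⟩
        rw [cross_fc_sub, f_one] at this
        nlinarith [mul_nonneg (by linarith : (0:ℝ) ≤ (f Δ ℓ').1 - (f Δ ℓ).1) hy0,
          mul_le_mul_of_nonneg_left hX (by linarith : (0:ℝ) ≤ 1 + 1 / ((Δ:ℝ) - 4))]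
      · have hA : (f Δ ℓ).1 ≤ 1/2 := by
          rw [← f_top Δ hΔ]; exact f_fst_mono Δ hΔ hlD
        have := h4 h
        rw [cross_f_sub, f_top Δ hΔ] at this
        nlinarith [mul_nonneg (by linarith : (0:ℝ) ≤ 1/2 - (f Δ ℓ).1) hy0,
          mul_le_mul_of_nonneg_left hX (by linarith : (0:ℝ) ≤ 1 + 1 / ((Δ:ℝ) - 4)),
          mul_nonneg (le_of_lt hc) hy0]
    · -- ℓ = Δ - 1
      intro hl
      have h : ℓ' = Δ - 1 := by omega
      have := h4 h
      rw [cross_f_sub, f_top Δ hΔ] at this ⊢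
      rw [hy2]; linarith

lemma RBR_mono (Δ : ℕ) (hΔ : 4 ≤ Δ) (v v' : ℝ × ℝ) (hy : v.2 = v'.2)
    (hx : v'.1 ≤ v.1) (r r' : ℕ) (hrr : r' ≤ r) (hr : r ≤ Δ - 1) :
    RBR Δ v' r' ⊆ RBR Δ v r := by
  have hD : (4:ℝ) ≤ (Δ:ℝ) := by exact_mod_cast hΔ
  intro p hp
  simp only [RBR, Set.mem_insert_iff, Set.mem_setOf_eq] at hp ⊢
  rcases hp with rfl | ⟨hpy, h1, h2, h3, h4⟩
  · rcases hx.lt_or_eq with hlt | heq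
    · right
      refine ⟨le_of_eq hy, ?_, ?_, ?_, ?_⟩
      · intro _
        rw [cross_f_sub]
        have : p.2 - v.2 = 0 := by rw [hy]; ring
        rw [this]; nlinarith
      · exact fun _ => hlt
      · rintro ⟨h5, -, -⟩
        have h5' : (5:ℝ) ≤ (Δ:ℝ) := by exact_mod_cast h5
        have hc : 0 < 1 / ((Δ:ℝ) - 4) := one_div_pos.mpr (by linarith)
        rw [cross_fc_sub]
        have hy0 : p.2 - v.2 = 0 := by rw [hy]; ring
        rw [hy0]
        nlinarith
      · intro _
        rw [cross_f_sub]
        have hy0 : p.2 - v.2 = 0 := by rw [hy]; ring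
        rw [hy0]; nlinarith
    · left
      exact (Prod.ext_iff.mpr ⟨heq.symm, hy⟩).symm
  · right
    have hy0 : (0:ℝ) ≤ p.2 - v'.2 := by linarith
    have hX : p.1 - v.1 ≤ p.1 - v'.1 := by linarith
    have hy2 : p.2 - v.2 = p.2 - v'.2 := by rw [hy]
    refine ⟨by linarith, ?_, ?_, ?_, ?_⟩
    · -- r = 0
      intro hr0
      have h : r' = 0 := by omega
      have := h1 h
      rw [cross_f_sub, f_one] at this ⊢
      rw [hy2]; linarith
    · -- Δ = 4 ∧ r = 1
      rintro ⟨hΔ4, hr1⟩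
      have hcase : r' = 0 ∨ r' = 1 := by omega
      rcases hcase with h | h
      · have := h1 h; rw [cross_f_sub, f_one] at this; linarith
      · have := h2 ⟨hΔ4, h⟩; linarith
    · -- 5 ≤ Δ ∧ 1 ≤ r ≤ Δ - 3
      rintro ⟨h5, hr1, hrD⟩
      have h5' : (5:ℝ) ≤ (Δ:ℝ) := by exact_mod_cast h5
      have hc : 0 < 1 / ((Δ:ℝ) - 4) := one_div_pos.mpr (by linarith)
      rw [cross_fc_sub, f_top Δ hΔ, hy2]
      have hcase : r' = 0 ∨ (1 ≤ r' ∧ r' ≤ Δ - 3) := by omega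
      rcases hcase with h | h
      · have hB : -(1/2) ≤ (f Δ r).1 := by
          rw [← f_one Δ]; exact f_fst_mono Δ hΔ (by omega)
        have := h1 h
        rw [cross_f_sub, f_one] at this
        nlinarith [mul_nonneg (le_of_lt hc) hy0,
          mul_nonneg (by linarith : (0:ℝ) ≤ (f Δ r).1 + 1/2) hy0,
          mul_le_mul_of_nonneg_left hX (by linarith : (0:ℝ) ≤ 1 + 1 / ((Δ:ℝ) - 4))]
      · have hBB : (f Δ r').1 ≤ (f Δ r).1 := f_fst_mono Δ hΔ hrr
        have := h3 ⟨h5, h.1, h.2⟩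
        rw [cross_fc_sub, f_top Δ hΔ] at this
        nlinarith [mul_nonneg (by linarith : (0:ℝ) ≤ (f Δ r).1 - (f Δ r').1) hy0,
          mul_le_mul_of_nonneg_left hX (by linarith : (0:ℝ) ≤ 1 + 1 / ((Δ:ℝ) - 4))]
    · -- r = Δ - 2
      intro hrD
      rw [cross_f_sub, f_top Δ hΔ, hy2]
      have hcase : r' = 0 ∨ (Δ = 4 ∧ r' = 1) ∨ (5 ≤ Δ ∧ 1 ≤ r' ∧ r' ≤ Δ - 3) ∨ r' = Δ - 2 := by
        omega
      rcases hcase with h | h | h | h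
      · have := h1 h; rw [cross_f_sub, f_one] at this; linarith
      · have := h2 h; linarith
      · have h5' : (5:ℝ) ≤ (Δ:ℝ) := by exact_mod_cast h.1
        have hc : 0 < 1 / ((Δ:ℝ) - 4) := one_div_pos.mpr (by linarith)
        have hB : (f Δ r').1 ≤ 1/2 := by
          rw [← f_top Δ hΔ]; exact f_fst_mono Δ hΔ (by omega)
        have := h3 h
        rw [cross_fc_sub, f_top Δ hΔ] at this
        nlinarith [mul_nonneg (by linarith : (0:ℝ) ≤ 1/2 - (f Δ r').1) hy0,
          mul_le_mul_of_nonneg_left hX (by linarith : (0:ℝ) ≤ 1 + 1 / ((Δ:ℝ) - 4)),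
          mul_nonneg (le_of_lt hc) hy0]
      · have := h4 h; rw [cross_f_sub, f_top Δ hΔ] at this; linarith

/-- Monotonicity of bounding regions. -/
theorem bounding_region_monotone (Δ : ℕ) (hΔ : 4 ≤ Δ) (u v u' v' : ℝ × ℝ)
    (hy1 : u.2 = v.2) (hy2 : v.2 = u'.2) (hy3 : u'.2 = v'.2)
    (hx1 : u.1 ≤ u'.1) (hx2 : u'.1 ≤ v'.1) (hx3 : v'.1 ≤ v.1)
    (ℓ ℓ' r r' : ℕ) (hℓℓ' : ℓ ≤ ℓ') (hℓ' : ℓ' ≤ Δ - 1) (hr'r : r' ≤ r) (hr : r ≤ Δ - 1) :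
    BR Δ u' v' ℓ' r' ⊆ BR Δ u v ℓ r := by
  have hL := LBR_mono Δ hΔ u u' (hy1.trans hy2) hx1 ℓ ℓ' hℓℓ' hℓ'
  have hR := RBR_mono Δ hΔ v v' (hy2.trans hy3) hx3 r r' hr'r hr
  exact Set.inter_subset_inter hL hR
end

section
/- Rays in directions f_i with i > r leave the right bounding cone on the right: Let Δ ≥ 4 be an integer, v ∈ ℝ², and let i, r be integers with 1 ≤ i ≤ Δ−2, 0 ≤ r ≤ Δ−1 and i > r. Then for every real α > 0 the point v + α·f_i does not belong to RBR(v, r); moreover, every point of RBR(v, r) other than v lies strictly to the left of the ray from v in direction f_i. -/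
open Set

/-- Rays in directions f i with i > r leave the right bounding cone on the right. -/
theorem ray_leaves_RBR_right (Δ : ℕ) (hΔ : 4 ≤ Δ) (v : ℝ × ℝ) (i r : ℕ)
    (hi1 : 1 ≤ i) (hi2 : i ≤ Δ - 2) (hr : r ≤ Δ - 1) (hir : r < i) :
    (∀ α : ℝ, 0 < α → v + α • f Δ i ∉ RBR Δ v r) ∧
    (∀ p ∈ RBR Δ v r, p ≠ v → 0 < cross (f Δ i) (p - v)) := by
  have hdR : (4:ℝ) ≤ (Δ:ℝ) := by exact_mod_cast hΔ
  have hiR : (i:ℝ) ≤ (Δ:ℝ) - 2 := by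
    have : i + 2 ≤ Δ := by omega
    have := (Nat.cast_le (α := ℝ)).2 this
    push_cast at this; linarith
  have hirR : (r:ℝ) + 1 ≤ (i:ℝ) := by exact_mod_cast hir
  have key : ∀ p ∈ RBR Δ v r, p ≠ v → 0 < cross (f Δ i) (p - v) := by
    intro p hp hpv
    rcases hp with h | h
    · exact absurd h hpv
    obtain ⟨hy, h0, h4, h5, _⟩ := h
    have hwy : 0 ≤ p.2 - v.2 := by linarith
    rcases Nat.eq_zero_or_pos r with hr0 | hr1
    · subst hr0
      have := h0 rfl
      simp only [cross, f, Prod.fst_sub, Prod.snd_sub] at this ⊢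
      have hiR1 : (1:ℝ) ≤ (i:ℝ) := by exact_mod_cast hi1
      have h3 : (0:ℝ) < (Δ:ℝ) - 3 := by linarith
      have hdiv : 0 ≤ ((i:ℝ) - 1) / ((Δ:ℝ) - 3) := div_nonneg (by linarith) h3.le
      norm_num at this
      nlinarith [mul_nonneg hdiv hwy]
    · rcases Nat.lt_or_ge Δ 5 with hΔ4 | hΔ5
      · -- Δ = 4, so r = 1, i = 2
        have hΔe : Δ = 4 := by omega
        have hre : r = 1 := by omega
        have hie : i = 2 := by omega
        subst hΔe hre hie
        have := h4 ⟨rfl, rfl⟩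
        simp only [cross, f, Prod.fst_sub, Prod.snd_sub]
        norm_num
        nlinarith
      · -- Δ ≥ 5, 1 ≤ r ≤ Δ - 3
        have hrle : r ≤ Δ - 3 := by omega
        have := h5 ⟨hΔ5, hr1, hrle⟩
        have h2Δ : ((Δ - 2 : ℕ) : ℝ) = (Δ:ℝ) - 2 := by
          have h2 : (2:ℕ) ≤ Δ := by omega
          push_cast [h2]; ring
        have h5R : (5:ℝ) ≤ (Δ:ℝ) := by exact_mod_cast hΔ5
        have h3 : (0:ℝ) < (Δ:ℝ) - 3 := by linarith
        have h4' : (0:ℝ) < (Δ:ℝ) - 4 := by linarith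
        have hrR : (1:ℝ) ≤ (r:ℝ) := by exact_mod_cast hr1
        simp only [cross, f, Prod.fst_sub, Prod.snd_sub, Prod.fst_add, Prod.snd_add,
          Prod.smul_fst, Prod.smul_snd, smul_eq_mul, h2Δ] at this ⊢
        have e3 : ((Δ:ℝ) - 2 - 1) / ((Δ:ℝ) - 3) = 1 := by
          rw [show (Δ:ℝ) - 2 - 1 = (Δ:ℝ) - 3 by ring, div_self h3.ne']
        rw [e3] at this
        set t := p.2 - v.2 with ht
        set u := p.1 - v.1 with hu
        set I := ((i:ℝ) - 1) / ((Δ:ℝ) - 3) with hI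
        set R := ((r:ℝ) - 1) / ((Δ:ℝ) - 3) with hR
        set E := 1 / ((Δ:ℝ) - 4) with hE
        clear_value t u I R E
        have hEpos : 0 < E := by rw [hE]; positivity
        have hcoef : 0 ≤ (I - R) + E * (I - 1) := by
          have heq : (I - R) + E * (I - 1) =
              (((i:ℝ) - (r:ℝ)) * ((Δ:ℝ) - 4) + ((i:ℝ) - (Δ:ℝ) + 2)) /
                (((Δ:ℝ) - 3) * ((Δ:ℝ) - 4)) := by
            rw [hI, hR, hE]; field_simp; ring
          rw [heq]
          apply div_nonneg _ (by positivity)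
          nlinarith [mul_nonneg (by linarith : (0:ℝ) ≤ (i:ℝ) - (r:ℝ) - 1) (by linarith : (0:ℝ) ≤ (Δ:ℝ) - 4)]
        have hprod : 0 < (1 + E) * ((-(1/2) + I) * t - u) := by
          have hid : (1 + E) * ((-(1/2) + I) * t - u) =
              ((-(1/2) + R + E * (-(1/2) + 1)) * t - (1 + E * 1) * u) +
                ((I - R) + E * (I - 1)) * t := by ring
          rw [hid]
          have hmt := mul_nonneg hcoef hwy
          linarith
        rcases mul_pos_iff.mp hprod with ⟨_, hG⟩ | ⟨hneg, _⟩
        · linarith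
        · linarith
  refine ⟨?_, key⟩
  intro α hα hmem
  have hne : v + α • f Δ i ≠ v := by
    intro h
    have := congrArg Prod.snd h
    simp [f, Prod.snd_add, Prod.smul_snd] at this
    linarith
  have := key _ hmem hne
  simp only [add_sub_cancel_left, cross, Prod.smul_fst, Prod.smul_snd, smul_eq_mul] at this
  nlinarith
end

section
/- Bounding regions of consecutive 2-bubbles meet only at the common root: Let Δ ≥ 4 be an integer, let u, v, w ∈ ℝ² be points with u_y = v_y = w_y and u_x ≤ v_x ≤ w_x, and let ℓ₀, r₀, ℓ, r be integers with 0 ≤ ℓ₀, r₀ ≤ Δ−1, 0 ≤ r ≤ Δ−1, 0 ≤ ℓ ≤ Δ−1 and ℓ − 1 ≥ r + 1. Then BR(uv, ℓ₀, r) ∩ BR(vw, ℓ, r₀) = {v}. -/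
open Set

/- ### Auxiliary lemmas -/

lemma cross_f1_eq (Δ : ℕ) (q : ℝ × ℝ) :
    cross (f Δ 1) q = -(1/2) * q.2 - q.1 := by
  simp [cross, f]

lemma cross_fΔ2_eq (Δ : ℕ) (hΔ : 4 ≤ Δ) (q : ℝ × ℝ) :
    cross (f Δ (Δ - 2)) q = (1/2) * q.2 - q.1 := by
  have h2 : ((Δ - 2 : ℕ) : ℝ) = (Δ : ℝ) - 2 := by
    have : (2:ℕ) ≤ Δ := by omega
    push_cast [this]; ring
  have hs : (Δ:ℝ) - 3 ≠ 0 := by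
    have : (4:ℝ) ≤ (Δ:ℝ) := by exact_mod_cast hΔ
    linarith
  simp only [cross, f, h2]
  field_simp
  ring

lemma clean_L (Δ ℓ : ℕ) (hΔ5 : 5 ≤ Δ) (q : ℝ × ℝ)
    (h : cross (f Δ ℓ + (1 / ((Δ:ℝ) - 4)) • f Δ 1) q < 0) :
    (-(1/2)*((Δ:ℝ)-3)*((Δ:ℝ)-4) + ((ℓ:ℝ)-1)*((Δ:ℝ)-4) - ((Δ:ℝ)-3)/2) * q.2
      - ((Δ:ℝ)-3)^2 * q.1 < 0 := by
  have hD : (5:ℝ) ≤ (Δ:ℝ) := by exact_mod_cast hΔ5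
  have hs : (0:ℝ) < (Δ:ℝ) - 3 := by linarith
  have ht : (0:ℝ) < (Δ:ℝ) - 4 := by linarith
  simp only [cross, f, Prod.mk_add_mk, Prod.smul_mk, smul_eq_mul] at h
  rw [show (-(1 / 2) + ((ℓ:ℝ) - 1) / ((Δ:ℝ) - 3) +
        1 / ((Δ:ℝ) - 4) * (-(1 / 2) + (((1:ℕ):ℝ) - 1) / ((Δ:ℝ) - 3))) * q.2 -
      (1 + 1 / ((Δ:ℝ) - 4) * 1) * q.1
    = ((-(1/2)*((Δ:ℝ)-3)*((Δ:ℝ)-4) + ((ℓ:ℝ)-1)*((Δ:ℝ)-4) - ((Δ:ℝ)-3)/2) * q.2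
      - ((Δ:ℝ)-3)^2 * q.1) / (((Δ:ℝ)-3)*((Δ:ℝ)-4)) from by
        push_cast
        field_simp
        ring] at h
  rw [div_lt_iff₀ (mul_pos hs ht)] at h
  linarith

lemma clean_R (Δ r : ℕ) (hΔ5 : 5 ≤ Δ) (q : ℝ × ℝ)
    (h : 0 < cross (f Δ r + (1 / ((Δ:ℝ) - 4)) • f Δ (Δ - 2)) q) :
    0 < (-(1/2)*((Δ:ℝ)-3)*((Δ:ℝ)-4) + ((r:ℝ)-1)*((Δ:ℝ)-4) + ((Δ:ℝ)-3)/2) * q.2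
      - ((Δ:ℝ)-3)^2 * q.1 := by
  have hD : (5:ℝ) ≤ (Δ:ℝ) := by exact_mod_cast hΔ5
  have hs : (0:ℝ) < (Δ:ℝ) - 3 := by linarith
  have ht : (0:ℝ) < (Δ:ℝ) - 4 := by linarith
  have h2 : ((Δ - 2 : ℕ) : ℝ) = (Δ : ℝ) - 2 := by
    have : (2:ℕ) ≤ Δ := by omega
    push_cast [this]; ring
  simp only [cross, f, Prod.mk_add_mk, Prod.smul_mk, smul_eq_mul, h2] at h
  rw [show (-(1 / 2) + ((r:ℝ) - 1) / ((Δ:ℝ) - 3) +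
        1 / ((Δ:ℝ) - 4) * (-(1 / 2) + ((Δ:ℝ) - 2 - 1) / ((Δ:ℝ) - 3))) * q.2 -
      (1 + 1 / ((Δ:ℝ) - 4) * 1) * q.1
    = ((-(1/2)*((Δ:ℝ)-3)*((Δ:ℝ)-4) + ((r:ℝ)-1)*((Δ:ℝ)-4) + ((Δ:ℝ)-3)/2) * q.2
      - ((Δ:ℝ)-3)^2 * q.1) / (((Δ:ℝ)-3)*((Δ:ℝ)-4)) from by
        field_simp
        ring] at h
  rw [lt_div_iff₀ (mul_pos hs ht)] at h
  linarith

lemma cross_horiz (Δ i : ℕ) (q : ℝ × ℝ) (hq : q.2 = 0) : cross (f Δ i) q = -q.1 := by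
  simp [cross, f, hq]

lemma mem_LBR_of_right (Δ : ℕ) (u v : ℝ × ℝ)
    (h2 : u.2 = v.2) (h1 : u.1 ≤ v.1) (ℓ : ℕ) : v ∈ LBR Δ u ℓ := by
  rcases eq_or_lt_of_le h1 with heq | hlt
  · left
    exact Prod.ext heq.symm h2.symm
  · right
    have hq2 : (v - u).2 = 0 := by simp [h2]
    have hq1 : 0 < (v - u).1 := by simpa using hlt
    refine ⟨le_of_eq h2, ?_, fun _ => hlt, ?_, ?_⟩
    · intro _
      rw [cross_horiz]; linarith; exact hq2
    · rintro ⟨hΔ5, -, -⟩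
      have hD : (5:ℝ) ≤ (Δ:ℝ) := by exact_mod_cast hΔ5
      simp only [cross, f, Prod.mk_add_mk, Prod.smul_mk, smul_eq_mul, hq2]
      have h4 : (0:ℝ) < (Δ:ℝ) - 4 := by linarith
      have : (0:ℝ) < 1 + 1 / ((Δ:ℝ) - 4) * 1 := by
        have : (0:ℝ) < 1 / ((Δ:ℝ) - 4) := by positivity
        linarith
      nlinarith
    · intro _
      rw [cross_horiz]; linarith; exact hq2

lemma mem_RBR_of_left (Δ : ℕ) (v w : ℝ × ℝ)
    (h2 : v.2 = w.2) (h1 : v.1 ≤ w.1) (r : ℕ) : v ∈ RBR Δ w r := by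
  rcases eq_or_lt_of_le h1 with heq | hlt
  · left
    exact Prod.ext heq h2
  · right
    have hq2 : (v - w).2 = 0 := by simp [h2]
    have hq1 : (v - w).1 < 0 := by simpa using hlt
    refine ⟨ge_of_eq h2, ?_, fun _ => hlt, ?_, ?_⟩
    · intro _
      rw [cross_horiz]; linarith; exact hq2
    · rintro ⟨hΔ5, -, -⟩
      have hD : (5:ℝ) ≤ (Δ:ℝ) := by exact_mod_cast hΔ5
      simp only [cross, f, Prod.mk_add_mk, Prod.smul_mk, smul_eq_mul, hq2]
      have h4 : (0:ℝ) < (Δ:ℝ) - 4 := by linarith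
      have : (0:ℝ) < 1 + 1 / ((Δ:ℝ) - 4) * 1 := by
        have : (0:ℝ) < 1 / ((Δ:ℝ) - 4) := by positivity
        linarith
      nlinarith
    · intro _
      rw [cross_horiz]; linarith; exact hq2

/-- Bounding regions of consecutive 2-bubbles meet only at the common root. -/
theorem bounding_regions_consecutive (Δ : ℕ) (hΔ : 4 ≤ Δ) (u v w : ℝ × ℝ)
    (hy1 : u.2 = v.2) (hy2 : v.2 = w.2) (hx1 : u.1 ≤ v.1) (hx2 : v.1 ≤ w.1)
    (ℓ₀ r₀ ℓ r : ℕ) (hℓ₀ : ℓ₀ ≤ Δ - 1) (hr₀ : r₀ ≤ Δ - 1)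
    (hr : r ≤ Δ - 1) (hℓ : ℓ ≤ Δ - 1) (hlr : r + 2 ≤ ℓ) :
    BR Δ u v ℓ₀ r ∩ BR Δ v w ℓ r₀ = {v} := by
  have hD4 : (4:ℝ) ≤ (Δ:ℝ) := by exact_mod_cast hΔ
  ext p
  simp only [BR, Set.mem_inter_iff, Set.mem_singleton_iff]
  constructor
  · rintro ⟨⟨-, hB⟩, hC, -⟩
    rw [RBR, Set.mem_insert_iff] at hB
    rw [LBR, Set.mem_insert_iff] at hC
    rcases hB with rfl | hB
    · rfl
    rcases hC with rfl | hC
    · rfl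
    exfalso
    simp only [Set.mem_setOf_eq] at hB hC
    obtain ⟨hy, hB0, hB1, hBm, -⟩ := hB
    obtain ⟨-, -, hC2, hCm, hCt⟩ := hC
    have hy' : 0 ≤ p.2 - v.2 := by linarith
    by_cases hℓtop : ℓ = Δ - 1
    · have hcl := hCt hℓtop
      rw [cross_fΔ2_eq Δ hΔ] at hcl
      simp only [Prod.fst_sub, Prod.snd_sub] at hcl
      -- x > y/2
      rcases Nat.eq_zero_or_pos r with hr0 | hr1
      · have hb := hB0 hr0
        rw [cross_f1_eq] at hb
        simp only [Prod.fst_sub, Prod.snd_sub] at hb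
        linarith
      · by_cases hΔ4 : Δ = 4
        · have hr1' : r = 1 := by omega
          have hb := hB1 ⟨hΔ4, hr1'⟩
          linarith
        · have hΔ5 : 5 ≤ Δ := by omega
          have hb := clean_R Δ r hΔ5 (p - v) (hBm ⟨hΔ5, hr1, by omega⟩)
          simp only [Prod.fst_sub, Prod.snd_sub] at hb
          have hR3 : (r:ℝ) ≤ (Δ:ℝ) - 3 := by
            have : r + 3 ≤ Δ := by omega
            have := (Nat.cast_le (α := ℝ)).mpr this
            push_cast at this
            linarith
          have hD5 : (5:ℝ) ≤ (Δ:ℝ) := by exact_mod_cast hΔ5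
          have hcoef : (0:ℝ) ≤ ((Δ:ℝ)-4)*(((Δ:ℝ)-2) - (r:ℝ)) :=
            mul_nonneg (by linarith) (by linarith)
          have hS : (0:ℝ) < ((Δ:ℝ)-3)^2 := by
            have h3 : (0:ℝ) < (Δ:ℝ)-3 := by linarith
            positivity
          linarith [mul_neg_of_neg_of_pos hcl hS, mul_nonneg hy' hcoef]
    · -- ℓ ≤ Δ - 2, ℓ ≥ 2
      have hℓ2 : 2 ≤ ℓ := by omega
      by_cases hΔ4 : Δ = 4
      · have hℓ2' : ℓ = 2 := by omega
        have hr0 : r = 0 := by omega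
        have hc := hC2 ⟨hΔ4, hℓ2'⟩
        have hb := hB0 hr0
        rw [cross_f1_eq] at hb
        simp only [Prod.fst_sub, Prod.snd_sub] at hb
        linarith
      · have hΔ5 : 5 ≤ Δ := by omega
        have hD5 : (5:ℝ) ≤ (Δ:ℝ) := by exact_mod_cast hΔ5
        have hc := clean_L Δ ℓ hΔ5 (p - v) (hCm ⟨hΔ5, hℓ2, by omega⟩)
        simp only [Prod.fst_sub, Prod.snd_sub] at hc
        have hL2 : (2:ℝ) ≤ (ℓ:ℝ) := by exact_mod_cast hℓ2
        rcases Nat.eq_zero_or_pos r with hr0 | hr1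
        · have hb := hB0 hr0
          rw [cross_f1_eq] at hb
          simp only [Prod.fst_sub, Prod.snd_sub] at hb
          have hcoef : (0:ℝ) ≤ ((ℓ:ℝ)-1)*((Δ:ℝ)-4) :=
            mul_nonneg (by linarith) (by linarith)
          have hS : (0:ℝ) < ((Δ:ℝ)-3)^2 := by
            have h3 : (0:ℝ) < (Δ:ℝ)-3 := by linarith
            positivity
          linarith [mul_pos hS hb, mul_nonneg hy' hcoef]
        · have hb := clean_R Δ r hΔ5 (p - v) (hBm ⟨hΔ5, hr1, by omega⟩)
          simp only [Prod.fst_sub, Prod.snd_sub] at hb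
          have hLR : (r:ℝ) + 2 ≤ (ℓ:ℝ) := by exact_mod_cast hlr
          have hcoef : (0:ℝ) ≤ ((ℓ:ℝ)-(r:ℝ))*((Δ:ℝ)-4) - ((Δ:ℝ)-3) := by
            have h2' : 2*((Δ:ℝ)-4) ≤ ((ℓ:ℝ)-(r:ℝ))*((Δ:ℝ)-4) :=
              mul_le_mul_of_nonneg_right (by linarith) (by linarith)
            linarith
          linarith [mul_nonneg hy' hcoef]
  · rintro rfl
    exact ⟨⟨mem_LBR_of_right Δ u p hy1 hx1 ℓ₀, Or.inl rfl⟩,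
      Or.inl rfl, mem_RBR_of_left Δ p w hy2 hx2 r₀⟩
end

section
/- Lifting inclusion of bounding regions: Let Δ ≥ 5 be an integer, let u, v ∈ ℝ² be points with u_y = v_y and u_x ≤ v_x, let ℓ, r be integers with 1 ≤ ℓ < r ≤ Δ−2, let h > 0 be real, and set u' = u + h·f_ℓ and v' = v + h·f_r. Then BRU(u'v', 1, Δ−2, h/(Δ−4)) ⊆ BRU(uv, ℓ, r, ((Δ−3)/(Δ−4))·h). -/
open Set

/-- Lifting inclusion of bounding regions. -/
theorem bounding_region_lift (Δ : ℕ) (hΔ : 5 ≤ Δ) (u v : ℝ × ℝ)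
    (hy : u.2 = v.2) (hx : u.1 ≤ v.1)
    (ℓ r : ℕ) (hℓ : 1 ≤ ℓ) (hℓr : ℓ < r) (hr : r ≤ Δ - 2) (h : ℝ) (hh : 0 < h) :
    BRU Δ (u + h • f Δ ℓ) (v + h • f Δ r) 1 (Δ - 2) (h / ((Δ : ℝ) - 4)) ⊆
      BRU Δ u v ℓ r (((Δ : ℝ) - 3) / ((Δ : ℝ) - 4) * h) := by
  have hD5 : (5:ℝ) ≤ (Δ:ℝ) := by exact_mod_cast hΔ
  have hD4 : (0:ℝ) < (Δ:ℝ) - 4 := by linarith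
  have hD3 : (0:ℝ) < (Δ:ℝ) - 3 := by linarith
  have hc2 : ((Δ - 2 : ℕ) : ℝ) = (Δ:ℝ) - 2 := by
    have h2 : (2:ℕ) ≤ Δ := by omega
    push_cast [h2]; ring
  intro p hp
  simp only [BRU, BR, LBR, RBR, mem_inter_iff, mem_insert_iff, mem_setOf_eq] at hp ⊢
  obtain ⟨⟨hpL, hpR⟩, hph⟩ := hp
  have hu2 : (u + h • f Δ ℓ).2 = u.2 + h := by simp [f]
  have hv2 : (v + h • f Δ r).2 = v.2 + h := by simp [f]
  have hA : u.2 + h ≤ p.2 := by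
    rcases hpL with h1 | h1
    · rw [h1, hu2]
    · rw [← hu2]; exact h1.1
  have hB : cross (f Δ 1) (p - (u + h • f Δ ℓ)) ≤ 0 := by
    rcases hpL with h1 | h1
    · simp [h1, cross]
    · exact h1.2.1 trivial
  have hC : 0 ≤ cross (f Δ (Δ - 2)) (p - (v + h • f Δ r)) := by
    rcases hpR with h1 | h1
    · simp [h1, cross]
    · exact h1.2.2.2.2 trivial
  have hheight : p.2 < u.2 + h + h / ((Δ:ℝ) - 4) := by
    rw [hu2] at hph; linarith
  have hwy : p.2 - u.2 - h - h / ((Δ:ℝ) - 4) < 0 := by linarith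
  refine ⟨⟨Or.inr ⟨by linarith, ?_, ?_, ?_, ?_⟩, Or.inr ⟨by linarith [hy ▸ hA], ?_, ?_, ?_, ?_⟩⟩, ?_⟩
  · -- ℓ = 1
    intro hℓ1
    subst hℓ1
    have hid : cross (f Δ 1) (p - u) = cross (f Δ 1) (p - (u + h • f Δ 1)) := by
      simp [cross, f, Prod.smul_mk, Prod.mk_add_mk]
      ring
    linarith [hid ▸ hB]
  · rintro ⟨h4, -⟩; omega
  · -- 2 ≤ ℓ ≤ Δ - 2
    rintro ⟨-, h2ℓ, -⟩
    have hL2 : (2:ℝ) ≤ (ℓ:ℝ) := by exact_mod_cast h2ℓ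
    have hid : cross (f Δ ℓ + (1 / ((Δ:ℝ) - 4)) • f Δ 1) (p - u)
        = (1 + 1/((Δ:ℝ)-4)) * cross (f Δ 1) (p - (u + h • f Δ ℓ))
          + (((ℓ:ℝ)-1)/((Δ:ℝ)-3)) * (p.2 - u.2 - h - h/((Δ:ℝ)-4)) := by
      simp only [cross, f, Prod.smul_mk, Prod.mk_add_mk, smul_eq_mul,
        Prod.fst_sub, Prod.snd_sub, Prod.fst_add, Prod.snd_add, Nat.cast_one]
      field_simp
      ring
    rw [hid]
    have ht1 : (1 + 1/((Δ:ℝ)-4)) * cross (f Δ 1) (p - (u + h • f Δ ℓ)) ≤ 0 := by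
      apply mul_nonpos_of_nonneg_of_nonpos _ hB
      positivity
    have ht2 : (((ℓ:ℝ)-1)/((Δ:ℝ)-3)) * (p.2 - u.2 - h - h/((Δ:ℝ)-4)) < 0 := by
      apply mul_neg_of_pos_of_neg _ hwy
      apply div_pos (by linarith) hD3
    linarith
  · intro hℓΔ; omega
  · intro hr0; omega
  · rintro ⟨h4, -⟩; omega
  · -- 1 ≤ r ≤ Δ - 3
    rintro ⟨-, -, hr3⟩
    have hR3 : (r:ℝ) ≤ (Δ:ℝ) - 3 := by
      have h3 : (3:ℕ) ≤ Δ := by omega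
      have : (r:ℝ) ≤ ((Δ - 3 : ℕ) : ℝ) := by exact_mod_cast hr3
      rw [Nat.cast_sub h3] at this
      push_cast at this
      linarith
    have hid : cross (f Δ r + (1 / ((Δ:ℝ) - 4)) • f Δ (Δ - 2)) (p - v)
        = (1 + 1/((Δ:ℝ)-4)) * cross (f Δ (Δ - 2)) (p - (v + h • f Δ r))
          + (((r:ℝ) - ((Δ:ℝ) - 2))/((Δ:ℝ)-3)) * (p.2 - v.2 - h - h/((Δ:ℝ)-4)) := by
      simp only [cross, f, Prod.smul_mk, Prod.mk_add_mk, smul_eq_mul,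
        Prod.fst_sub, Prod.snd_sub, Prod.fst_add, Prod.snd_add, hc2]
      field_simp
      ring
    rw [hid]
    have ht1 : 0 ≤ (1 + 1/((Δ:ℝ)-4)) * cross (f Δ (Δ - 2)) (p - (v + h • f Δ r)) := by
      apply mul_nonneg _ hC
      positivity
    have ht2 : 0 < (((r:ℝ) - ((Δ:ℝ) - 2))/((Δ:ℝ)-3)) * (p.2 - v.2 - h - h/((Δ:ℝ)-4)) := by
      apply mul_pos_of_neg_of_neg
      · apply div_neg_of_neg_of_pos _ hD3
        linarith
      · rw [← hy] at *; linarith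
    linarith
  · -- r = Δ - 2
    intro hrr
    subst hrr
    have hid : cross (f Δ (Δ - 2)) (p - v)
        = cross (f Δ (Δ - 2)) (p - (v + h • f Δ (Δ - 2))) := by
      simp [cross, f, Prod.smul_mk, Prod.mk_add_mk]
      ring
    linarith [hid ▸ hC]
  · -- height
    have : ((Δ:ℝ) - 3) / ((Δ:ℝ) - 4) * h = h + h / ((Δ:ℝ) - 4) := by
      field_simp; ring
    linarith
end

section
/- Composition inclusion of bounding regions: Let Δ ≥ 5 be an integer, let u, v, w ∈ ℝ² be points with u_y = v_y = w_y and u_x ≤ v_x ≤ w_x, and let ℓ, r', r be integers with 0 ≤ ℓ ≤ Δ−1, 0 ≤ r' ≤ Δ−3 and 1 ≤ r ≤ Δ−1. Then BRU(uv, ℓ, r', ((Δ−3)/(Δ−4))²·(w_x − v_x)) ⊆ BR(uw, ℓ, r). -/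
open Set

lemma hB' (D Y Xv W ρ : ℝ) (hD : 5 ≤ D) (hY : 0 ≤ Y) (hW : 0 ≤ W) (hρ : 1 ≤ ρ)
    (hyp : 0 < -(1/2) * Y - Xv) :
    0 < (-(1/2) + (ρ-1)/(D-3) + (1/(D-4)) * (1/2)) * Y - (1 + 1/(D-4)) * (Xv - W) := by
  have he : (0:ℝ) < D - 3 := by linarith
  have hg : (0:ℝ) < D - 4 := by linarith
  have goal' : 0 < (2*(D-4)*(ρ-1) + (D-3) - (D-3)*(D-4)) * Y - 2*(D-3)^2*(Xv - W) := by
    nlinarith [mul_nonneg (mul_nonneg (by linarith : (0:ℝ) ≤ 2*(D-4)) hY)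
      (by linarith : (0:ℝ) ≤ ρ - 1), mul_nonneg (by positivity : (0:ℝ) ≤ 2*(D-3)^2) hW,
      mul_pos (by positivity : (0:ℝ) < 2*(D-3)^2) hyp]
  have eq2 : (-(1/2) + (ρ-1)/(D-3) + (1/(D-4)) * (1/2)) * Y - (1 + 1/(D-4)) * (Xv - W)
      = ((2*(D-4)*(ρ-1) + (D-3) - (D-3)*(D-4)) * Y - 2*(D-3)^2*(Xv - W)) / (2*(D-3)*(D-4)) := by
    field_simp; try ring
  rw [eq2]; exact div_pos goal' (by positivity)

lemma hA' (D Y Xv W ρ ρ' : ℝ) (hD : 5 ≤ D) (hY : 0 ≤ Y) (hW : 0 ≤ W)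
    (hh : Y < ((D-3)/(D-4))^2 * W) (hρ : 1 ≤ ρ) (hρ' : ρ' ≤ D - 3)
    (hyp : 0 < (-(1/2) + (ρ'-1)/(D-3) + (1/(D-4)) * (1/2)) * Y - (1 + 1/(D-4)) * Xv) :
    0 < (-(1/2) + (ρ-1)/(D-3) + (1/(D-4)) * (1/2)) * Y - (1 + 1/(D-4)) * (Xv - W) := by
  have he : (0:ℝ) < D - 3 := by linarith
  have hg : (0:ℝ) < D - 4 := by linarith
  have hh' : (D-4)^2 * Y ≤ (D-3)^2 * W := by
    have h1 := (mul_lt_mul_of_pos_left hh (by positivity : (0:ℝ) < (D-4)^2)).le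
    have h2 : (D-4)^2 * (((D-3)/(D-4))^2 * W) = (D-3)^2 * W := by field_simp; try ring
    linarith [h2 ▸ h1]
  have hyp' : 0 < (2*(D-4)*(ρ'-1) + (D-3) - (D-3)*(D-4)) * Y - 2*(D-3)^2*Xv := by
    have h2 := mul_pos (show (0:ℝ) < 2*(D-3)*(D-4) by positivity) hyp
    have eq : (2*(D-4)*(ρ'-1) + (D-3) - (D-3)*(D-4)) * Y - 2*(D-3)^2*Xv
        = 2*(D-3)*(D-4) * ((-(1/2) + (ρ'-1)/(D-3) + (1/(D-4)) * (1/2)) * Y - (1 + 1/(D-4)) * Xv) := by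
      field_simp; try ring
    linarith [eq ▸ h2]
  have goal' : 0 < (2*(D-4)*(ρ-1) + (D-3) - (D-3)*(D-4)) * Y - 2*(D-3)^2*(Xv - W) := by
    nlinarith [mul_nonneg (mul_nonneg (by linarith : (0:ℝ) ≤ 2*(D-4)) hY)
      (by linarith : (0:ℝ) ≤ (D-4) + ρ - ρ'), hh', hyp']
  have eq2 : (-(1/2) + (ρ-1)/(D-3) + (1/(D-4)) * (1/2)) * Y - (1 + 1/(D-4)) * (Xv - W)
      = ((2*(D-4)*(ρ-1) + (D-3) - (D-3)*(D-4)) * Y - 2*(D-3)^2*(Xv - W)) / (2*(D-3)*(D-4)) := by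
    field_simp; try ring
  rw [eq2]; exact div_pos goal' (by positivity)

lemma hC' (D Y Xv W ρ' : ℝ) (hD : 5 ≤ D) (hY : 0 ≤ Y) (hW : 0 ≤ W) (hρ' : ρ' ≤ D - 3)
    (hyp : 0 < (-(1/2) + (ρ'-1)/(D-3) + (1/(D-4)) * (1/2)) * Y - (1 + 1/(D-4)) * Xv) :
    0 ≤ (1/2) * Y - (Xv - W) := by
  have he : (0:ℝ) < D - 3 := by linarith
  have hg : (0:ℝ) < D - 4 := by linarith
  have hyp' : 0 < (2*(D-4)*(ρ'-1) + (D-3) - (D-3)*(D-4)) * Y - 2*(D-3)^2*Xv := by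
    have h2 := mul_pos (show (0:ℝ) < 2*(D-3)*(D-4) by positivity) hyp
    have eq : (2*(D-4)*(ρ'-1) + (D-3) - (D-3)*(D-4)) * Y - 2*(D-3)^2*Xv
        = 2*(D-3)*(D-4) * ((-(1/2) + (ρ'-1)/(D-3) + (1/(D-4)) * (1/2)) * Y - (1 + 1/(D-4)) * Xv) := by
      field_simp; try ring
    linarith [eq ▸ h2]
  -- need 2(D-3)^2 * ((1/2)Y - Xv + W) ≥ 0
  have key : 0 ≤ (D-3)^2 * Y - 2*(D-3)^2*(Xv - W) := by
    nlinarith [mul_nonneg (mul_nonneg (by linarith : (0:ℝ) ≤ 2*(D-4)) hY)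
      (by linarith : (0:ℝ) ≤ (D-3) - ρ'), mul_nonneg (by linarith : (0:ℝ) ≤ 2*(D-4)) hY,
      mul_nonneg (by positivity : (0:ℝ) ≤ 2*(D-3)^2) hW]
  by_contra hcon
  push_neg at hcon
  nlinarith [key, mul_pos (mul_pos he he) (show 0 < (Xv - W) - (1/2)*Y by linarith)]

/-- Composition inclusion of bounding regions. -/
theorem bounding_region_composition (Δ : ℕ) (hΔ : 5 ≤ Δ) (u v w : ℝ × ℝ)
    (hy1 : u.2 = v.2) (hy2 : v.2 = w.2) (hx1 : u.1 ≤ v.1) (hx2 : v.1 ≤ w.1)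
    (ℓ r' r : ℕ) (hℓ : ℓ ≤ Δ - 1) (hr' : r' ≤ Δ - 3) (hr1 : 1 ≤ r) (hr2 : r ≤ Δ - 1) :
    BRU Δ u v ℓ r' ((((Δ : ℝ) - 3) / ((Δ : ℝ) - 4)) ^ 2 * (w.1 - v.1)) ⊆
      BR Δ u w ℓ r := by
  intro p hp
  obtain ⟨⟨hL, hR⟩, hH⟩ := hp
  have hD : (5:ℝ) ≤ (Δ:ℝ) := by exact_mod_cast hΔ
  have he : ((Δ:ℝ)-3) ≠ 0 := by linarith
  have hg : (0:ℝ) < (Δ:ℝ) - 4 := by linarith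
  have hcast : ((Δ-2:ℕ):ℝ) = (Δ:ℝ) - 2 := by rw [Nat.cast_sub (by omega)]; norm_num
  have honed : ((Δ:ℝ) - 2 - 1) / ((Δ:ℝ) - 3) = 1 := by rw [div_eq_one_iff_eq he]; ring
  have crossR : ∀ (i : ℕ) (q z : ℝ × ℝ),
      cross (f Δ i + (1/((Δ:ℝ)-4)) • f Δ (Δ-2)) (q - z) =
        (-(1/2) + ((i:ℝ)-1)/((Δ:ℝ)-3) + (1/((Δ:ℝ)-4)) * (1/2)) * (q.2 - z.2)
          - (1 + 1/((Δ:ℝ)-4)) * (q.1 - z.1) := by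
    intro i q z
    simp only [cross, f, Prod.fst_add, Prod.snd_add, Prod.smul_mk, smul_eq_mul, Prod.fst_sub,
      Prod.snd_sub, hcast]
    rw [honed]; ring
  have cross2 : ∀ (q z : ℝ × ℝ),
      cross (f Δ (Δ-2)) (q - z) = (1/2) * (q.2 - z.2) - (q.1 - z.1) := by
    intro q z
    simp only [cross, f, Prod.fst_sub, Prod.snd_sub, hcast]
    rw [honed]; ring
  have cross1 : ∀ (q z : ℝ × ℝ),
      cross (f Δ 1) (q - z) = -(1/2) * (q.2 - z.2) - (q.1 - z.1) := by
    intro q z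
    simp only [cross, f, Prod.fst_sub, Prod.snd_sub]
    norm_num
  have hW : (0:ℝ) ≤ w.1 - v.1 := by linarith
  refine ⟨hL, ?_⟩
  simp only [RBR, Set.mem_insert_iff, Set.mem_setOf_eq] at hR ⊢
  rcases hR with rfl | ⟨hY, h0, _, h13, _⟩
  · -- p = v
    by_cases hvw : p.1 = w.1
    · exact Or.inl (Prod.ext hvw hy2)
    · have hvw' : p.1 < w.1 := lt_of_le_of_ne hx2 hvw
      refine Or.inr ⟨le_of_eq hy2.symm, fun h => by omega, fun h => by omega, ?_, ?_⟩
      · rintro ⟨-, -, -⟩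
        rw [crossR, hy2, sub_self, mul_zero, zero_sub]
        have h1 : (0:ℝ) < 1 + 1/((Δ:ℝ)-4) := by positivity
        nlinarith [mul_pos h1 (show (0:ℝ) < w.1 - p.1 by linarith)]
      · intro _
        rw [cross2, hy2, sub_self, mul_zero, zero_sub]
        linarith
  · -- general case
    have hYv : (0:ℝ) ≤ p.2 - v.2 := by linarith
    have hh : p.2 - v.2 < (((Δ:ℝ)-3)/((Δ:ℝ)-4))^2 * (w.1 - v.1) := by
      have hH' : p.2 < u.2 + (((Δ:ℝ)-3)/((Δ:ℝ)-4))^2 * (w.1 - v.1) := hH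
      rw [hy1] at hH'
      linarith
    have e1 : p.2 - w.2 = p.2 - v.2 := by rw [hy2]
    have e2 : p.1 - w.1 = (p.1 - v.1) - (w.1 - v.1) := by ring
    refine Or.inr ⟨by rw [← hy2]; linarith, fun h => by omega, fun h => by omega, ?_, ?_⟩
    · rintro ⟨-, hr1', -⟩
      rw [crossR, e1, e2]
      have hρ : (1:ℝ) ≤ (r:ℝ) := by exact_mod_cast hr1
      rcases Nat.eq_zero_or_pos r' with hz | hpos
      · subst hz
        have hyp := h0 rfl
        rw [cross1] at hyp
        exact hB' (Δ:ℝ) _ _ _ _ hD hYv hW hρ hyp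
      · have hρ' : ((r':ℕ):ℝ) ≤ (Δ:ℝ) - 3 := by
          have h3 : ((r':ℕ):ℝ) ≤ ((Δ-3:ℕ):ℝ) := Nat.cast_le.mpr hr'
          have h4 : ((Δ-3:ℕ):ℝ) = (Δ:ℝ) - 3 := by rw [Nat.cast_sub (by omega)]; norm_num
          linarith [h4 ▸ h3]
        have hyp := h13 ⟨hΔ, hpos, hr'⟩
        rw [crossR] at hyp
        exact hA' (Δ:ℝ) _ _ _ _ _ hD hYv hW hh hρ hρ' hyp
    · intro _
      rw [cross2, e1, e2]
      rcases Nat.eq_zero_or_pos r' with hz | hpos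
      · subst hz
        have hyp := h0 rfl
        rw [cross1] at hyp
        linarith
      · have hρ' : ((r':ℕ):ℝ) ≤ (Δ:ℝ) - 3 := by
          have h3 : ((r':ℕ):ℝ) ≤ ((Δ-3:ℕ):ℝ) := Nat.cast_le.mpr hr'
          have h4 : ((Δ-3:ℕ):ℝ) = (Δ:ℝ) - 3 := by rw [Nat.cast_sub (by omega)]; norm_num
          linarith [h4 ▸ h3]
        have hyp := h13 ⟨hΔ, hpos, hr'⟩
        rw [crossR] at hyp
        exact hC' (Δ:ℝ) _ _ _ _ hD hYv hW hρ' hyp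
end

section
/- Disjointness of bounding regions of non-consecutive 2-bubbles: Let Δ ≥ 5 be an integer, let u, v, w, x ∈ ℝ² be points with u_y = v_y = w_y = x_y, u_x ≤ v_x ≤ w_x ≤ x_x and v_x − u_x = x_x − w_x ≤ w_x − v_x, and let ℓ₀, r₀, ℓ, r be integers with 0 ≤ ℓ₀, r₀ ≤ Δ−1, 2 ≤ ℓ ≤ Δ−1 and 0 ≤ r ≤ Δ−3. Then BRU(uv, ℓ₀, r, ((Δ−3)/(Δ−4))·(v_x − u_x)) ∩ BRU(wx, ℓ, r₀, ((Δ−3)/(Δ−4))·(x_x − w_x)) = ∅. -/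
open Set

/-!
For `5 ≤ Δ`, `r ≤ Δ - 3` and `2 ≤ ℓ ≤ Δ - 1`, every boundary ray of `RBR(v, r)` and of `LBR(w, ℓ)`
moves outward by at most `μ = (Δ - 4) / (2 (Δ - 3))` per unit of height, so
`p_x - v_x ≤ μ (p_y - v_y)` on the first cone and `w_x - p_x ≤ μ (p_y - w_y)` on the second.
When `v` and `w` lie on a horizontal line, a common point therefore has height at least
`(w_x - v_x) / (2μ) = ((Δ - 3) / (Δ - 4)) (w_x - v_x) ≥ ((Δ - 3) / (Δ - 4)) (v_x - u_x)`,
which the truncation of the first region excludes.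
-/

noncomputable def coneSlope (Δ : ℕ) : ℝ := ((Δ : ℝ) - 4) / (2 * ((Δ : ℝ) - 3))

lemma fst_le_mul_snd_of_cross_nonneg {d q : ℝ × ℝ} {s : ℝ} (hd : 0 < d.2) (hq : 0 ≤ q.2)
    (hslope : d.1 ≤ s * d.2) (h : 0 ≤ cross d q) : q.1 ≤ s * q.2 := by
  unfold cross at h
  nlinarith

lemma neg_fst_le_mul_snd_of_cross_nonpos {d q : ℝ × ℝ} {s : ℝ} (hd : 0 < d.2) (hq : 0 ≤ q.2)
    (hslope : -(s * d.2) ≤ d.1) (h : cross d q ≤ 0) : -q.1 ≤ s * q.2 := by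
  unfold cross at h
  nlinarith

@[simp]
lemma f_snd (Δ i : ℕ) : (f Δ i).2 = 1 := rfl

@[simp]
lemma f_one_fst (Δ : ℕ) : (f Δ 1).1 = -(1 / 2) := by
  simp [f]

lemma f_sub_two_fst {Δ : ℕ} (hΔ : 4 ≤ Δ) : (f Δ (Δ - 2)).1 = 1 / 2 := by
  have hc : (Δ : ℝ) - 3 ≠ 0 := by
    have : (4 : ℝ) ≤ Δ := by exact_mod_cast hΔ
    linarith
  rw [f, Nat.cast_sub (by omega)]
  field_simp
  ring

lemma coneSlope_pos {Δ : ℕ} (hΔ : 5 ≤ Δ) : 0 < coneSlope Δ := by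
  have : (5 : ℝ) ≤ Δ := by exact_mod_cast hΔ
  unfold coneSlope
  apply div_pos <;> linarith

lemma two_mul_coneSlope_mul_height {Δ : ℕ} (hΔ : 5 ≤ Δ) (t : ℝ) :
    2 * coneSlope Δ * (((Δ : ℝ) - 3) / ((Δ : ℝ) - 4) * t) = t := by
  have : (5 : ℝ) ≤ Δ := by exact_mod_cast hΔ
  have h3 : (Δ : ℝ) - 3 ≠ 0 := by linarith
  have h4 : (Δ : ℝ) - 4 ≠ 0 := by linarith
  unfold coneSlope
  field_simp

lemma sub_le_coneSlope_mul_of_mem_RBR {Δ r : ℕ} {v p : ℝ × ℝ} (hΔ : 5 ≤ Δ) (hr : r ≤ Δ - 3)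
    (hp : p ∈ RBR Δ v r) : p.1 - v.1 ≤ coneSlope Δ * (p.2 - v.2) := by
  have hΔ' : (5 : ℝ) ≤ Δ := by exact_mod_cast hΔ
  have h3 : (0 : ℝ) < Δ - 3 := by linarith
  have h4 : (0 : ℝ) < Δ - 4 := by linarith
  rcases hp with rfl | ⟨hvp, hr0, -, hr1, -⟩
  · simp
  have hq : 0 ≤ (p - v).2 := by simpa using hvp
  suffices (p - v).1 ≤ coneSlope Δ * (p - v).2 by simpa using this
  rcases Nat.eq_zero_or_pos r with rfl | hr_pos
  · refine fst_le_mul_snd_of_cross_nonneg (by simp) hq ?_ (hr0 rfl).le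
    simp only [f_one_fst, f_snd, mul_one]
    linarith [coneSlope_pos hΔ]
  · have hr' : (r : ℝ) ≤ Δ - 3 := by
      rw [← Nat.cast_ofNat, ← Nat.cast_sub (by omega)]
      exact_mod_cast hr
    have hd : 0 < (f Δ r + (1 / ((Δ : ℝ) - 4)) • f Δ (Δ - 2)).2 := by
      simp only [Prod.snd_add, Prod.smul_snd, f_snd, smul_eq_mul]
      linarith [one_div_pos.mpr h4]
    refine fst_le_mul_snd_of_cross_nonneg hd hq ?_ (hr1 ⟨hΔ, hr_pos, hr⟩).le
    simp only [Prod.fst_add, Prod.snd_add, Prod.smul_fst, Prod.smul_snd, smul_eq_mul,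
      f_snd, f_sub_two_fst (by omega : 4 ≤ Δ)]
    unfold coneSlope f
    field_simp
    nlinarith [mul_le_mul_of_nonneg_left hr' h4.le]

lemma sub_le_coneSlope_mul_of_mem_LBR {Δ ℓ : ℕ} {w p : ℝ × ℝ} (hΔ : 5 ≤ Δ) (hℓ₁ : 2 ≤ ℓ)
    (hℓ₂ : ℓ ≤ Δ - 1) (hp : p ∈ LBR Δ w ℓ) : w.1 - p.1 ≤ coneSlope Δ * (p.2 - w.2) := by
  have hΔ' : (5 : ℝ) ≤ Δ := by exact_mod_cast hΔ
  have h3 : (0 : ℝ) < Δ - 3 := by linarith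
  have h4 : (0 : ℝ) < Δ - 4 := by linarith
  rcases hp with rfl | ⟨hwp, -, -, hl1, hl2⟩
  · simp
  have hq : 0 ≤ (p - w).2 := by simpa using hwp
  suffices -(p - w).1 ≤ coneSlope Δ * (p - w).2 by simpa using this
  rcases Nat.lt_or_ge ℓ (Δ - 1) with hℓ | hℓ
  · have hℓ' : (2 : ℝ) ≤ ℓ := by exact_mod_cast hℓ₁
    have hd : 0 < (f Δ ℓ + (1 / ((Δ : ℝ) - 4)) • f Δ 1).2 := by
      simp only [Prod.snd_add, Prod.smul_snd, f_snd, smul_eq_mul]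
      linarith [one_div_pos.mpr h4]
    refine neg_fst_le_mul_snd_of_cross_nonpos hd hq ?_ (hl1 ⟨hΔ, hℓ₁, by omega⟩).le
    simp only [Prod.fst_add, Prod.snd_add, Prod.smul_fst, Prod.smul_snd, smul_eq_mul,
      f_snd, f_one_fst]
    unfold coneSlope f
    field_simp
    nlinarith [mul_le_mul_of_nonneg_left hℓ' h4.le]
  · refine neg_fst_le_mul_snd_of_cross_nonpos (by simp) hq ?_ (hl2 (by omega)).le
    rw [f_sub_two_fst (by omega), f_snd, mul_one]
    linarith [coneSlope_pos hΔ]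

theorem bounding_regions_nonconsecutive_disjoint_general (Δ : ℕ) (hΔ : 5 ≤ Δ) (u v w x : ℝ × ℝ)
    (hy1 : u.2 = v.2) (hy2 : v.2 = w.2)
    (heq : v.1 - u.1 = x.1 - w.1) (hle : x.1 - w.1 ≤ w.1 - v.1)
    (ℓ₀ r₀ ℓ r : ℕ)
    (hℓ1 : 2 ≤ ℓ) (hℓ2 : ℓ ≤ Δ - 1) (hr : r ≤ Δ - 3) :
    BRU Δ u v ℓ₀ r (((Δ : ℝ) - 3) / ((Δ : ℝ) - 4) * (v.1 - u.1)) ∩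
      BRU Δ w x ℓ r₀ (((Δ : ℝ) - 3) / ((Δ : ℝ) - 4) * (x.1 - w.1)) = ∅ := by
  rw [Set.eq_empty_iff_forall_notMem]
  rintro p ⟨⟨⟨-, hpv⟩, hp_low⟩, ⟨hpw, -⟩, -⟩
  have hv := sub_le_coneSlope_mul_of_mem_RBR hΔ hr hpv
  have hw := sub_le_coneSlope_mul_of_mem_LBR hΔ hℓ1 hℓ2 hpw
  have hh : p.2 - v.2 < ((Δ : ℝ) - 3) / ((Δ : ℝ) - 4) * (v.1 - u.1) := by
    rw [← hy1]
    exact sub_left_lt_of_lt_add hp_low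
  have : w.1 - v.1 < w.1 - v.1 := calc
    w.1 - v.1 ≤ 2 * coneSlope Δ * (p.2 - v.2) := by rw [← hy2] at hw; linarith
    _ < 2 * coneSlope Δ * (((Δ : ℝ) - 3) / ((Δ : ℝ) - 4) * (v.1 - u.1)) :=
      mul_lt_mul_of_pos_left hh (by linarith [coneSlope_pos hΔ])
    _ = v.1 - u.1 := two_mul_coneSlope_mul_height hΔ _
    _ ≤ w.1 - v.1 := heq ▸ hle
  exact lt_irrefl _ this

/-- Disjointness of bounding regions of non-consecutive 2-bubbles. -/
theorem bounding_regions_nonconsecutive_disjoint (Δ : ℕ) (hΔ : 5 ≤ Δ) (u v w x : ℝ × ℝ)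
    (hy1 : u.2 = v.2) (hy2 : v.2 = w.2) (hy3 : w.2 = x.2)
    (hx1 : u.1 ≤ v.1) (hx2 : v.1 ≤ w.1) (hx3 : w.1 ≤ x.1)
    (heq : v.1 - u.1 = x.1 - w.1) (hle : x.1 - w.1 ≤ w.1 - v.1)
    (ℓ₀ r₀ ℓ r : ℕ) (hℓ₀ : ℓ₀ ≤ Δ - 1) (hr₀ : r₀ ≤ Δ - 1)
    (hℓ1 : 2 ≤ ℓ) (hℓ2 : ℓ ≤ Δ - 1) (hr : r ≤ Δ - 3) :
    BRU Δ u v ℓ₀ r (((Δ : ℝ) - 3) / ((Δ : ℝ) - 4) * (v.1 - u.1)) ∩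
      BRU Δ w x ℓ r₀ (((Δ : ℝ) - 3) / ((Δ : ℝ) - 4) * (x.1 - w.1)) = ∅ :=
  bounding_regions_nonconsecutive_disjoint_general Δ hΔ u v w x hy1 hy2 heq hle ℓ₀ r₀ ℓ r hℓ1 hℓ2 hr
end
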